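/- arXiv:1707.08272 — 5 statements merged into one kernel-verified Lean document; each statement's English description precedes it below -/
import Mathlib

section
/- For every even integer n > 2, the maximum of |Υ(G, G+e)|, taken over all bipartite graphs G on n vertices and all edges e ∉ E(G), equals 3·2^{(n−2)/2}: every such pair (G, e) satisfies |Υ(G, G+e)| ≤ 3·2^{(n−2)/2}, and some pair attains equality. -/
/-- `(X, Y)` is a biclique of the bipartite graph with parts `L`, `R` and edge set `E`:
`X ⊆ L`, `Y ⊆ R`, and every vertex of `X` is joined to every vertex of `Y`. -/
def IsBiclique {V : Type*} (L R : Finset V) (E : Finset (V × V))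
    (B : Finset V × Finset V) : Prop :=
  B.1 ⊆ L ∧ B.2 ⊆ R ∧ ∀ x ∈ B.1, ∀ y ∈ B.2, (x, y) ∈ E

/-- `(X, Y)` is a maximal biclique: it is a biclique, and no other biclique contains it
componentwise. -/
def IsMaximalBiclique {V : Type*} (L R : Finset V) (E : Finset (V × V))
    (B : Finset V × Finset V) : Prop :=
  IsBiclique L R E B ∧
    ∀ B' : Finset V × Finset V, IsBiclique L R E B' → B.1 ⊆ B'.1 → B.2 ⊆ B'.2 → B' = B

/-- `BC L R E` is the set of maximal bicliques of the bipartite graph `(L, R, E)`. -/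
def BC {V : Type*} (L R : Finset V) (E : Finset (V × V)) : Set (Finset V × Finset V) :=
  {B | IsMaximalBiclique L R E B}

section Part1

variable {W : Type*} [DecidableEq W] {L R : Finset W} {E : Finset (W × W)} {u v : W}
  {B₁ B₂ : Finset W × Finset W}
set_option linter.unusedSectionVars false

lemma bc_finite (L R : Finset W) (E : Finset (W × W)) : (BC L R E).Finite := by
  apply Set.Finite.subset (Finset.finite_toSet (L.powerset ×ˢ R.powerset))
  intro B hB
  simp only [Finset.coe_product, Set.mem_prod, Finset.mem_coe, Finset.mem_powerset]
  exact ⟨hB.1.1, hB.1.2.1⟩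

/-- Two maximal bicliques with the same first component are equal. -/
lemma bc_union_snd (h₁ : B₁ ∈ BC L R E) (h₂ : B₂ ∈ BC L R E)
    (h : B₁.1 = B₂.1) : B₂.2 ⊆ B₁.2 := by
  have hb : IsBiclique L R E (B₁.1, B₁.2 ∪ B₂.2) := by
    refine ⟨h₁.1.1, Finset.union_subset h₁.1.2.1 (h₂.1.2.1), ?_⟩
    intro x hx y hy
    rcases Finset.mem_union.1 hy with hy | hy
    · exact h₁.1.2.2 x hx y hy
    · exact h₂.1.2.2 x (h ▸ hx) y hy
  have e₁ := h₁.2 _ hb (by simp) Finset.subset_union_left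
  have := congrArg Prod.snd e₁
  simp only at this
  rw [← this]
  exact Finset.subset_union_right

lemma bc_fst_inj (h₁ : B₁ ∈ BC L R E) (h₂ : B₂ ∈ BC L R E)
    (h : B₁.1 = B₂.1) : B₁ = B₂ :=
  Prod.ext h (Finset.Subset.antisymm (bc_union_snd h₂ h₁ h.symm) (bc_union_snd h₁ h₂ h))

lemma bc_union_fst (h₁ : B₁ ∈ BC L R E) (h₂ : B₂ ∈ BC L R E)
    (h : B₁.2 = B₂.2) : B₂.1 ⊆ B₁.1 := by
  have hb : IsBiclique L R E (B₁.1 ∪ B₂.1, B₁.2) := by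
    refine ⟨Finset.union_subset h₁.1.1 h₂.1.1, h₁.1.2.1, ?_⟩
    intro x hx y hy
    rcases Finset.mem_union.1 hx with hx | hx
    · exact h₁.1.2.2 x hx y hy
    · exact h₂.1.2.2 x hx y (h ▸ hy)
  have e₁ := h₁.2 _ hb Finset.subset_union_left (by simp)
  have := congrArg Prod.fst e₁
  simp only at this
  rw [← this]
  exact Finset.subset_union_right

lemma bc_snd_inj (h₁ : B₁ ∈ BC L R E) (h₂ : B₂ ∈ BC L R E)
    (h : B₁.2 = B₂.2) : B₁ = B₂ :=
  Prod.ext (Finset.Subset.antisymm (bc_union_fst h₂ h₁ h.symm) (bc_union_fst h₁ h₂ h)) h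


lemma mem_unionE {x y : W} : (x, y) ∈ E ∪ ({(u,v)} : Finset (W × W)) ↔ (x, y) ∈ E ∨ (x = u ∧ y = v) := by
  simp [Prod.ext_iff, or_comm]

/-- Bicliques of `G` are bicliques of `G + e`. -/
lemma biclique_mono (h : IsBiclique L R E B₁) : IsBiclique L R (E ∪ {(u,v)}) B₁ :=
  ⟨h.1, h.2.1, fun x hx y hy => Finset.mem_union_left _ (h.2.2 x hx y hy)⟩

/-- A new maximal biclique contains both `u` and `v`. -/
lemma new_mem (huv : (u, v) ∉ E)
    (hB : B₁ ∈ BC L R (E ∪ {(u,v)}) \ BC L R E) : u ∈ B₁.1 ∧ v ∈ B₁.2 := by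
  by_contra hc
  apply hB.2
  have hbic : IsBiclique L R E B₁ := by
    refine ⟨hB.1.1.1, hB.1.1.2.1, fun x hx y hy => ?_⟩
    rcases mem_unionE.1 (hB.1.1.2.2 x hx y hy) with h | ⟨rfl, rfl⟩
    · exact h
    · exact absurd ⟨hx, hy⟩ hc
  exact ⟨hbic, fun B' hB' h1 h2 => hB.1.2 B' (biclique_mono hB') h1 h2⟩

lemma removed_not_both (huv : (u, v) ∉ E) (hB : B₁ ∈ BC L R E) :
    ¬(u ∈ B₁.1 ∧ v ∈ B₁.2) := fun ⟨h1, h2⟩ => huv (hB.1.2.2 u h1 v h2)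

/-- The completion map sends a removed maximal biclique to a new maximal biclique. -/
lemma removed_psi (hu : u ∈ L) (hv : v ∈ R) (huv : (u, v) ∉ E)
    (hB : B₁ ∈ BC L R E \ BC L R (E ∪ {(u,v)})) :
    (insert u B₁.1, insert v B₁.2) ∈ BC L R (E ∪ {(u,v)}) \ BC L R E := by
  obtain ⟨hmax, hnot⟩ := hB
  have hnb := removed_not_both huv hmax
  -- B is a biclique of G'
  have hbic' : IsBiclique L R (E ∪ {(u,v)}) B₁ := biclique_mono hmax.1
  -- B is not maximal in G', so there is a strictly bigger G'-biclique
  have : ∃ B', IsBiclique L R (E ∪ {(u,v)}) B' ∧ B₁.1 ⊆ B'.1 ∧ B₁.2 ⊆ B'.2 ∧ B' ≠ B₁ := by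
    by_contra hc
    push_neg at hc
    exact hnot ⟨hbic', fun B' h1 h2 h3 => hc B' h1 h2 h3⟩
  obtain ⟨B', hB'b, hB'1, hB'2, hB'ne⟩ := this
  -- key step: u is adjacent (in G') to all of B₁.2 and v to all of B₁.1
  have key : (∀ y ∈ B₁.2, (u, y) ∈ E ∪ {(u,v)}) ∧ (∀ x ∈ B₁.1, (x, v) ∈ E ∪ {(u,v)}) := by
    have hdiff : (∃ x ∈ B'.1, x ∉ B₁.1) ∨ (∃ y ∈ B'.2, y ∉ B₁.2) := by
      by_contra hc
      push_neg at hc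
      exact hB'ne (Prod.ext (Finset.Subset.antisymm (fun x hx => hc.1 x hx) hB'1)
        (Finset.Subset.antisymm (fun y hy => hc.2 y hy) hB'2))
    rcases hdiff with ⟨x', hx'B, hx'⟩ | ⟨y', hy'B, hy'⟩
    · -- the biclique (insert x' B₁.1, B₁.2) of G' is not a biclique of G
      have hC : IsBiclique L R (E ∪ {(u,v)}) (insert x' B₁.1, B₁.2) := by
        refine ⟨Finset.insert_subset (hB'b.1 hx'B) hmax.1.1, hmax.1.2.1, fun x hx y hy => ?_⟩
        rcases Finset.mem_insert.1 hx with rfl | hx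
        · exact hB'b.2.2 x hx'B y (hB'2 hy)
        · exact hbic'.2.2 x hx y hy
      have hCE : ¬ IsBiclique L R E (insert x' B₁.1, B₁.2) := by
        intro hcon
        have := hmax.2 _ hcon (Finset.subset_insert _ _) (le_refl _)
        exact hx' (by rw [← this]; exact Finset.mem_insert_self _ _)
      have : ∃ x ∈ insert x' B₁.1, ∃ y ∈ B₁.2, (x, y) ∉ E := by
        by_contra hc
        push_neg at hc
        exact hCE ⟨hC.1, hC.2.1, hc⟩
      obtain ⟨x, hx, y, hy, hxyE⟩ := this
      rcases mem_unionE.1 (hC.2.2 x hx y hy) with h | ⟨hxu', hyv'⟩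
      · exact absurd h hxyE
      -- so x = u ∈ insert x' B₁.1 and v = y ∈ B₁.2
      have hvB : v ∈ B₁.2 := hyv' ▸ hy
      have hxu : x' = u := by
        rcases Finset.mem_insert.1 hx with h | h
        · exact h ▸ hxu'
        · exact absurd ⟨hxu' ▸ h, hvB⟩ hnb
      constructor
      · intro y₀ hy₀
        exact hB'b.2.2 u (hxu ▸ hx'B) y₀ (hB'2 hy₀)
      · intro x₀ hx₀
        exact Finset.mem_union_left _ (hmax.1.2.2 x₀ hx₀ v hvB)
    · -- symmetric case
      have hC : IsBiclique L R (E ∪ {(u,v)}) (B₁.1, insert y' B₁.2) := by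
        refine ⟨hmax.1.1, Finset.insert_subset (hB'b.2.1 hy'B) hmax.1.2.1, fun x hx y hy => ?_⟩
        rcases Finset.mem_insert.1 hy with rfl | hy
        · exact hB'b.2.2 x (hB'1 hx) y hy'B
        · exact hbic'.2.2 x hx y hy
      have hCE : ¬ IsBiclique L R E (B₁.1, insert y' B₁.2) := by
        intro hcon
        have := hmax.2 _ hcon (le_refl _) (Finset.subset_insert _ _)
        exact hy' (by rw [← this]; exact Finset.mem_insert_self _ _)
      have : ∃ x ∈ B₁.1, ∃ y ∈ insert y' B₁.2, (x, y) ∉ E := by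
        by_contra hc
        push_neg at hc
        exact hCE ⟨hC.1, hC.2.1, hc⟩
      obtain ⟨x, hx, y, hy, hxyE⟩ := this
      rcases mem_unionE.1 (hC.2.2 x hx y hy) with h | ⟨hxu', hyv'⟩
      · exact absurd h hxyE
      have huB : u ∈ B₁.1 := hxu' ▸ hx
      have hyv : y' = v := by
        rcases Finset.mem_insert.1 hy with h | h
        · exact h ▸ hyv'
        · exact absurd ⟨huB, hyv' ▸ h⟩ hnb
      constructor
      · intro y₀ hy₀
        exact Finset.mem_union_left _ (hmax.1.2.2 u huB y₀ hy₀)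
      · intro x₀ hx₀
        exact hB'b.2.2 x₀ (hB'1 hx₀) v (hyv ▸ hy'B)
  -- ψ(B) is a G'-biclique
  have hpsib : IsBiclique L R (E ∪ {(u,v)}) (insert u B₁.1, insert v B₁.2) := by
    refine ⟨Finset.insert_subset hu hmax.1.1, Finset.insert_subset hv hmax.1.2.1,
      fun x hx y hy => ?_⟩
    rcases Finset.mem_insert.1 hx with hxu | hx
    · rcases Finset.mem_insert.1 hy with hyv | hy
      · exact mem_unionE.2 (Or.inr ⟨hxu, hyv⟩)
      · exact hxu ▸ key.1 y hy
    · rcases Finset.mem_insert.1 hy with hyv | hy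
      · exact hyv ▸ key.2 x hx
      · exact Finset.mem_union_left _ (hmax.1.2.2 x hx y hy)
  constructor
  · -- ψ(B) is maximal in G'
    refine ⟨hpsib, fun C hC h1 h2 => ?_⟩
    -- strip u, v (when not already in B) to get a G-biclique containing B
    have hD : IsBiclique L R E (B₁.1 ∪ C.1.erase u, B₁.2 ∪ C.2.erase v) := by
      refine ⟨Finset.union_subset hmax.1.1 ((Finset.erase_subset _ _).trans hC.1),
        Finset.union_subset hmax.1.2.1 ((Finset.erase_subset _ _).trans hC.2.1), ?_⟩
      intro x hx y hy
      have hxC : x ∈ C.1 := by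
        rcases Finset.mem_union.1 hx with h | h
        · exact h1 (Finset.mem_insert_of_mem h)
        · exact Finset.mem_of_mem_erase h
      have hyC : y ∈ C.2 := by
        rcases Finset.mem_union.1 hy with h | h
        · exact h2 (Finset.mem_insert_of_mem h)
        · exact Finset.mem_of_mem_erase h
      rcases mem_unionE.1 (hC.2.2 x hxC y hyC) with h | ⟨rfl, rfl⟩
      · exact h
      · -- x = u, y = v: then u ∈ B₁.1 and v ∈ B₁.2, contradiction
        exfalso
        apply hnb
        constructor
        · rcases Finset.mem_union.1 hx with h | h
          · exact h
          · exact absurd rfl (Finset.ne_of_mem_erase h)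
        · rcases Finset.mem_union.1 hy with h | h
          · exact h
          · exact absurd rfl (Finset.ne_of_mem_erase h)
    have hDB := hmax.2 _ hD Finset.subset_union_left Finset.subset_union_left
    have hD1 := congrArg Prod.fst hDB
    have hD2 := congrArg Prod.snd hDB
    simp only at hD1 hD2
    have hC1 : C.1 ⊆ insert u B₁.1 := by
      intro x hx
      by_cases hxu : x = u
      · exact hxu ▸ Finset.mem_insert_self _ _
      · exact Finset.mem_insert_of_mem
          (hD1 ▸ (Finset.mem_union_right _ (Finset.mem_erase.2 ⟨hxu, hx⟩)))
    have hC2 : C.2 ⊆ insert v B₁.2 := by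
      intro y hy
      by_cases hyv : y = v
      · exact hyv ▸ Finset.mem_insert_self _ _
      · exact Finset.mem_insert_of_mem
          (hD2 ▸ (Finset.mem_union_right _ (Finset.mem_erase.2 ⟨hyv, hy⟩)))
    exact Prod.ext (Finset.Subset.antisymm hC1 h1) (Finset.Subset.antisymm hC2 h2)
  · -- ψ(B) is not in BC(G): not even a biclique of G
    intro hcon
    exact huv (hcon.1.2.2 u (Finset.mem_insert_self _ _) v (Finset.mem_insert_self _ _))


lemma new_ncard_le_fst (hu : u ∈ L) (huv : (u, v) ∉ E) :
    (BC L R (E ∪ {(u,v)}) \ BC L R E).ncard ≤ 2 ^ (L.card - 1) := by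
  have h := Set.ncard_le_ncard_of_injOn (s := BC L R (E ∪ {(u,v)}) \ BC L R E)
    (t := ((L.erase u).powerset : Finset (Finset W)))
    (fun B => B.1.erase u)
    (fun B hB => by
      simp only [Finset.coe_powerset, Set.mem_preimage, Set.mem_powerset_iff,
        Finset.mem_coe, Finset.mem_powerset]
      exact Finset.erase_subset_erase u hB.1.1.1)
    (fun B₁ h₁ B₂ h₂ he => by
      have hu₁ := (new_mem huv h₁).1
      have hu₂ := (new_mem huv h₂).1
      have : B₁.1 = B₂.1 := by
        rw [← Finset.insert_erase hu₁, ← Finset.insert_erase hu₂, show B₁.1.erase u = B₂.1.erase u from he]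
      exact bc_fst_inj h₁.1 h₂.1 this)
    (Finset.finite_toSet _)
  rwa [Set.ncard_coe_finset, Finset.card_powerset, Finset.card_erase_of_mem hu] at h

lemma new_ncard_le_snd (hv : v ∈ R) (huv : (u, v) ∉ E) :
    (BC L R (E ∪ {(u,v)}) \ BC L R E).ncard ≤ 2 ^ (R.card - 1) := by
  have h := Set.ncard_le_ncard_of_injOn (s := BC L R (E ∪ {(u,v)}) \ BC L R E)
    (t := ((R.erase v).powerset : Finset (Finset W)))
    (fun B => B.2.erase v)
    (fun B hB => by
      simp only [Finset.coe_powerset, Set.mem_preimage, Set.mem_powerset_iff,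
        Finset.mem_coe, Finset.mem_powerset]
      exact Finset.erase_subset_erase v hB.1.1.2.1)
    (fun B₁ h₁ B₂ h₂ he => by
      have hv₁ := (new_mem huv h₁).2
      have hv₂ := (new_mem huv h₂).2
      have : B₁.2 = B₂.2 := by
        rw [← Finset.insert_erase hv₁, ← Finset.insert_erase hv₂, show B₁.2.erase v = B₂.2.erase v from he]
      exact bc_snd_inj h₁.1 h₂.1 this)
    (Finset.finite_toSet _)
  rwa [Set.ncard_coe_finset, Finset.card_powerset, Finset.card_erase_of_mem hv] at h

lemma removed_ncard_le (hu : u ∈ L) (hv : v ∈ R) (huv : (u, v) ∉ E) :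
    (BC L R E \ BC L R (E ∪ {(u,v)})).ncard ≤
      2 * (BC L R (E ∪ {(u,v)}) \ BC L R E).ncard := by
  set Rem := BC L R E \ BC L R (E ∪ {(u,v)}) with hRem
  set New := BC L R (E ∪ {(u,v)}) \ BC L R E with hNew
  have hfinN : New.Finite := (bc_finite L R (E ∪ {(u,v)})).subset Set.diff_subset
  have hsplit : Rem = (Rem ∩ {B | u ∈ B.1}) ∪ (Rem ∩ {B | u ∉ B.1}) := by
    ext B; by_cases h : u ∈ B.1 <;> simp [h]
  have h1 : (Rem ∩ {B | u ∈ B.1}).ncard ≤ New.ncard := by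
    apply Set.ncard_le_ncard_of_injOn (fun B => (insert u B.1, insert v B.2))
      (fun B hB => removed_psi hu hv huv hB.1)
      (fun B₁ h₁ B₂ h₂ he => ?_) hfinN
    have e1 := congrArg Prod.fst he
    simp only at e1
    have : B₁.1 = B₂.1 := by
      rw [Finset.insert_eq_self.2 h₁.2] at e1
      rw [Finset.insert_eq_self.2 h₂.2] at e1
      exact e1
    exact bc_fst_inj h₁.1.1 h₂.1.1 this
  have h2 : (Rem ∩ {B | u ∉ B.1}).ncard ≤ New.ncard := by
    apply Set.ncard_le_ncard_of_injOn (fun B => (insert u B.1, insert v B.2))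
      (fun B hB => removed_psi hu hv huv hB.1)
      (fun B₁ h₁ B₂ h₂ he => ?_) hfinN
    have e1 := congrArg Prod.fst he
    simp only at e1
    have : B₁.1 = B₂.1 := by
      rw [← Finset.erase_insert h₁.2, ← Finset.erase_insert h₂.2, e1]
    exact bc_fst_inj h₁.1.1 h₂.1.1 this
  calc Rem.ncard ≤ (Rem ∩ {B | u ∈ B.1}).ncard + (Rem ∩ {B | u ∉ B.1}).ncard := by
        conv_lhs => rw [hsplit]
        exact Set.ncard_union_le _ _
    _ ≤ New.ncard + New.ncard := Nat.add_le_add h1 h2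
    _ = 2 * New.ncard := (two_mul _).symm

theorem upper_bound (n : ℕ) (hn : 2 < n) (heven : Even n)
    (hd : Disjoint L R) (hE : E ⊆ L ×ˢ R) (hcard : L.card + R.card = n)
    (hu : u ∈ L) (hv : v ∈ R) (huv : (u, v) ∉ E) :
    ((BC L R (E ∪ {(u, v)}) \ BC L R E) ∪
      (BC L R E \ BC L R (E ∪ {(u, v)}))).ncard ≤ 3 * 2 ^ ((n - 2) / 2) := by
  set New := BC L R (E ∪ {(u,v)}) \ BC L R E with hNew
  set Rem := BC L R E \ BC L R (E ∪ {(u,v)}) with hRem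
  have hfinN : New.Finite := (bc_finite L R (E ∪ {(u,v)})).subset Set.diff_subset
  have hfinR : Rem.Finite := (bc_finite L R E).subset Set.diff_subset
  have hdisj : Disjoint New Rem := by
    rw [Set.disjoint_left]
    rintro B ⟨hb1, hb2⟩ ⟨hb3, hb4⟩
    exact hb2 hb3
  rw [Set.ncard_union_eq hdisj hfinN hfinR]
  have hnewb : New.ncard ≤ 2 ^ ((n - 2) / 2) := by
    obtain ⟨k, hk⟩ := heven
    rcases le_total L.card R.card with h | h
    · refine (new_ncard_le_fst hu huv).trans (Nat.pow_le_pow_right (by norm_num) ?_)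
      have h1 : 1 ≤ L.card := Finset.card_pos.2 ⟨u, hu⟩ 
      omega
    · refine (new_ncard_le_snd hv huv).trans (Nat.pow_le_pow_right (by norm_num) ?_)
      have h1 : 1 ≤ R.card := Finset.card_pos.2 ⟨v, hv⟩
      omega
  have hremb := removed_ncard_le hu hv huv
  calc New.ncard + Rem.ncard ≤ New.ncard + 2 * New.ncard := Nat.add_le_add_left hremb _
    _ = 3 * New.ncard := by ring
    _ ≤ 3 * 2 ^ ((n - 2) / 2) := Nat.mul_le_mul_left 3 hnewb

end Part1
namespace Construction

/-- Left part: indices `< a`. -/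
def Lp (n a : ℕ) : Finset (Fin n) := Finset.univ.filter (fun i => i.val < a)
/-- Right part: indices `≥ a`. -/
def Rp (n a : ℕ) : Finset (Fin n) := Finset.univ.filter (fun i => a ≤ i.val)

/-- The edge set of `G + e`: `0` is complete to the right, `a` is complete to the left,
and the rest is a complete bipartite graph minus the perfect matching `i ↔ i + a`. -/
def EF (n a : ℕ) : Finset (Fin n × Fin n) :=
  (Finset.univ ×ˢ Finset.univ).filter
    (fun p => p.1.val < a ∧ a ≤ p.2.val ∧
      (p.1.val = 0 ∨ p.2.val = a ∨ p.2.val ≠ p.1.val + a))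

/-- The edge set of `G`: `EF` minus the edge `(0, a)`. -/
def E0 (n a : ℕ) : Finset (Fin n × Fin n) :=
  (EF n a).filter (fun p => ¬(p.1.val = 0 ∧ p.2.val = a))

/-- The right side of the maximal biclique indexed by `S`. -/
def Yp (n a : ℕ) (S : Finset (Fin n)) : Finset (Fin n) :=
  Finset.univ.filter (fun j => a < j.val ∧ ∀ s ∈ S, s.val + a ≠ j.val)

variable {n a : ℕ} {S : Finset (Fin n)} {u v i j : Fin n}

lemma mem_Lp : i ∈ Lp n a ↔ i.val < a := by simp [Lp]
lemma mem_Rp : i ∈ Rp n a ↔ a ≤ i.val := by simp [Rp]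
lemma mem_EF {x y : Fin n} : (x, y) ∈ EF n a ↔
    x.val < a ∧ a ≤ y.val ∧ (x.val = 0 ∨ y.val = a ∨ y.val ≠ x.val + a) := by
  simp [EF]
lemma mem_E0 {x y : Fin n} : (x, y) ∈ E0 n a ↔
    (x.val < a ∧ a ≤ y.val ∧ (x.val = 0 ∨ y.val = a ∨ y.val ≠ x.val + a)) ∧
      ¬(x.val = 0 ∧ y.val = a) := by
  simp [E0, EF, and_assoc]
lemma mem_Yp : j ∈ Yp n a S ↔ a < j.val ∧ ∀ s ∈ S, s.val + a ≠ j.val := by simp [Yp]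

lemma E0_subset_EF : E0 n a ⊆ EF n a := Finset.filter_subset _ _

lemma S_elem (hS : S ⊆ (Lp n a).erase u) (hu : u.val = 0) (hs : i ∈ S) :
    0 < i.val ∧ i.val < a := by
  have h := hS hs
  rw [Finset.mem_erase, mem_Lp] at h
  refine ⟨?_, h.2⟩
  rcases Nat.eq_zero_or_pos i.val with h' | h'
  · exact absurd (Fin.ext (h'.trans hu.symm)) h.1
  · exact h'

lemma u_not_mem (hS : S ⊆ (Lp n a).erase u) : u ∉ S :=
  fun h => absurd rfl (Finset.mem_erase.1 (hS h)).1

section Main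

variable (hn : n = a + a) (ha : 2 ≤ a) (hu : u.val = 0) (hv : v.val = a)
  (hS : S ⊆ (Lp n a).erase u)

include hn ha hu hv hS

/-- `f0 S` is a maximal biclique of `G + e`. -/
lemma f0_mem : IsMaximalBiclique (Lp n a) (Rp n a) (EF n a)
    (insert u S, insert v (Yp n a S)) := by
  have hYR : Yp n a S ⊆ Rp n a := fun j hj => mem_Rp.2 (le_of_lt (mem_Yp.1 hj).1)
  constructor
  · refine ⟨?_, ?_, ?_⟩
    · exact Finset.insert_subset (mem_Lp.2 (by omega)) (fun s hs => mem_Lp.2 (S_elem hS hu hs).2)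
    · exact Finset.insert_subset (mem_Rp.2 (by omega)) hYR
    · intro x hx y hy
      rcases Finset.mem_insert.1 hx with hxu | hx
      · -- x = u: u complete to the right
        rcases Finset.mem_insert.1 hy with hyv | hy
        · exact mem_EF.2 (by rw [hxu, hyv, hu, hv]; omega)
        · have := mem_Yp.1 hy
          exact mem_EF.2 (by rw [hxu, hu]; omega)
      · have hxS := S_elem hS hu hx
        rcases Finset.mem_insert.1 hy with hyv | hy
        · exact mem_EF.2 (by rw [hyv, hv]; omega)
        · have hyY := mem_Yp.1 hy
          have := hyY.2 x hx
          exact mem_EF.2 (by omega)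
  · rintro ⟨X, Y⟩ hB' h1 h2
    simp only at h1 h2 ⊢
    have hX : X ⊆ insert u S := by
      intro x hx
      by_contra hxn
      have hxL : x.val < a := mem_Lp.1 (hB'.1 hx)
      have hxu : x.val ≠ 0 := fun h =>
        hxn ((Fin.ext (h.trans hu.symm) : x = u) ▸ Finset.mem_insert_self _ _)
      have hxS : x ∉ S := fun h => hxn (Finset.mem_insert_of_mem h)
      have hw : (⟨x.val + a, by omega⟩ : Fin n) ∈ Yp n a S := by
        refine mem_Yp.2 ⟨by simp; omega, fun s hs h => ?_⟩
        simp only at h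
        exact hxS ((Fin.ext (by omega) : s = x) ▸ hs)
      have hwB : (⟨x.val + a, by omega⟩ : Fin n) ∈ Y :=
        h2 (Finset.mem_insert_of_mem hw)
      have := mem_EF.1 (hB'.2.2 x hx _ hwB)
      simp only at this
      omega
    have hY : Y ⊆ insert v (Yp n a S) := by
      intro y hy
      by_contra hyn
      have hyR : a ≤ y.val := mem_Rp.1 (hB'.2.1 hy)
      have hyv : y.val ≠ a := fun h =>
        hyn ((Fin.ext (h.trans hv.symm) : y = v) ▸ Finset.mem_insert_self _ _)
      have hyY : y ∉ Yp n a S := fun h => hyn (Finset.mem_insert_of_mem h)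
      rw [mem_Yp] at hyY
      push_neg at hyY
      obtain ⟨s, hs, hsy⟩ := hyY (by omega)
      have hsS := S_elem hS hu hs
      have := mem_EF.1 (hB'.2.2 s (h1 (Finset.mem_insert_of_mem hs)) y hy)
      omega
    exact Prod.ext (Finset.Subset.antisymm hX h1) (Finset.Subset.antisymm hY h2)

/-- `f0 S` is not a maximal biclique of `G` (it is not even a biclique). -/
lemma f0_not_mem : ¬ IsMaximalBiclique (Lp n a) (Rp n a) (E0 n a)
    (insert u S, insert v (Yp n a S)) := by
  intro h
  have := mem_E0.1 (h.1.2.2 u (Finset.mem_insert_self _ _) v (Finset.mem_insert_self _ _))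
  omega

/-- `f1 S` is a maximal biclique of `G`. -/
lemma f1_mem : IsMaximalBiclique (Lp n a) (Rp n a) (E0 n a) (insert u S, Yp n a S) := by
  have hYR : Yp n a S ⊆ Rp n a := fun j hj => mem_Rp.2 (le_of_lt (mem_Yp.1 hj).1)
  constructor
  · refine ⟨?_, hYR, ?_⟩
    · exact Finset.insert_subset (mem_Lp.2 (by omega)) (fun s hs => mem_Lp.2 (S_elem hS hu hs).2)
    · intro x hx y hy
      have hyY := mem_Yp.1 hy
      rcases Finset.mem_insert.1 hx with hxu | hx
      · exact mem_E0.2 (by rw [hxu, hu]; omega)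
      · have hxS := S_elem hS hu hx
        have := hyY.2 x hx
        exact mem_E0.2 (by omega)
  · rintro ⟨X, Y⟩ hB' h1 h2
    simp only at h1 h2 ⊢
    have hX : X ⊆ insert u S := by
      intro x hx
      by_contra hxn
      have hxL : x.val < a := mem_Lp.1 (hB'.1 hx)
      have hxu : x.val ≠ 0 := fun h =>
        hxn ((Fin.ext (h.trans hu.symm) : x = u) ▸ Finset.mem_insert_self _ _)
      have hxS : x ∉ S := fun h => hxn (Finset.mem_insert_of_mem h)
      have hw : (⟨x.val + a, by omega⟩ : Fin n) ∈ Yp n a S := by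
        refine mem_Yp.2 ⟨by simp; omega, fun s hs h => ?_⟩
        simp only at h
        exact hxS ((Fin.ext (by omega) : s = x) ▸ hs)
      have := mem_E0.1 (hB'.2.2 x hx _ (h2 hw))
      simp only at this
      omega
    have hY : Y ⊆ Yp n a S := by
      intro y hy
      by_contra hyn
      have hyR : a ≤ y.val := mem_Rp.1 (hB'.2.1 hy)
      by_cases hyv : y.val = a
      · -- y = v, but u is not adjacent to v in G
        have := mem_E0.1 (hB'.2.2 u (h1 (Finset.mem_insert_self _ _)) y hy)
        omega
      · rw [mem_Yp] at hyn
        push_neg at hyn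
        obtain ⟨s, hs, hsy⟩ := hyn (by omega)
        have hsS := S_elem hS hu hs
        have := mem_E0.1 (hB'.2.2 s (h1 (Finset.mem_insert_of_mem hs)) y hy)
        omega
    exact Prod.ext (Finset.Subset.antisymm hX h1) (Finset.Subset.antisymm hY h2)

/-- `f1 S` is not a maximal biclique of `G + e`. -/
lemma f1_not_mem : ¬ IsMaximalBiclique (Lp n a) (Rp n a) (EF n a) (insert u S, Yp n a S) := by
  intro h
  have hbig := (f0_mem hn ha hu hv hS).1
  have := h.2 _ hbig (le_refl _) (Finset.subset_insert _ _)
  have hv' : v ∈ Yp n a S := by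
    have := congrArg Prod.snd this
    simp only at this
    rw [← this]
    exact Finset.mem_insert_self _ _
  have := (mem_Yp.1 hv').1
  omega

/-- `f2 S` is a maximal biclique of `G`. -/
lemma f2_mem : IsMaximalBiclique (Lp n a) (Rp n a) (E0 n a) (S, insert v (Yp n a S)) := by
  have hYR : Yp n a S ⊆ Rp n a := fun j hj => mem_Rp.2 (le_of_lt (mem_Yp.1 hj).1)
  constructor
  · refine ⟨fun s hs => mem_Lp.2 (S_elem hS hu hs).2,
      Finset.insert_subset (mem_Rp.2 (by omega)) hYR, ?_⟩
    intro x hx y hy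
    have hxS := S_elem hS hu hx
    rcases Finset.mem_insert.1 hy with hyv | hy
    · exact mem_E0.2 (by rw [hyv, hv]; omega)
    · have hyY := mem_Yp.1 hy
      have := hyY.2 x hx
      exact mem_E0.2 (by omega)
  · rintro ⟨X, Y⟩ hB' h1 h2
    simp only at h1 h2 ⊢
    have hX : X ⊆ S := by
      intro x hx
      by_contra hxS
      have hxL : x.val < a := mem_Lp.1 (hB'.1 hx)
      by_cases hxu : x.val = 0
      · -- x = u, not adjacent to v in G
        have := mem_E0.1 (hB'.2.2 x hx v (h2 (Finset.mem_insert_self _ _)))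
        omega
      · have hw : (⟨x.val + a, by omega⟩ : Fin n) ∈ Yp n a S := by
          refine mem_Yp.2 ⟨by simp; omega, fun s hs h => ?_⟩
          simp only at h
          exact hxS ((Fin.ext (by omega) : s = x) ▸ hs)
        have := mem_E0.1 (hB'.2.2 x hx _ (h2 (Finset.mem_insert_of_mem hw)))
        simp only at this
        omega
    have hY : Y ⊆ insert v (Yp n a S) := by
      intro y hy
      by_contra hyn
      have hyR : a ≤ y.val := mem_Rp.1 (hB'.2.1 hy)
      have hyv : y.val ≠ a := fun h =>
        hyn ((Fin.ext (h.trans hv.symm) : y = v) ▸ Finset.mem_insert_self _ _)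
      have hyY : y ∉ Yp n a S := fun h => hyn (Finset.mem_insert_of_mem h)
      rw [mem_Yp] at hyY
      push_neg at hyY
      obtain ⟨s, hs, hsy⟩ := hyY (by omega)
      have hsS := S_elem hS hu hs
      have := mem_E0.1 (hB'.2.2 s (h1 hs) y hy)
      omega
    exact Prod.ext (Finset.Subset.antisymm hX h1) (Finset.Subset.antisymm hY h2)

/-- `f2 S` is not a maximal biclique of `G + e`. -/
lemma f2_not_mem : ¬ IsMaximalBiclique (Lp n a) (Rp n a) (EF n a) (S, insert v (Yp n a S)) := by
  intro h
  have hbig := (f0_mem hn ha hu hv hS).1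
  have := h.2 _ hbig (Finset.subset_insert _ _) (le_refl _)
  have hu' : u ∈ S := by
    have := congrArg Prod.fst this
    simp only at this
    rw [← this]
    exact Finset.mem_insert_self _ _
  exact (u_not_mem hS) hu'

end Main

end Construction

namespace Construction

variable {n a : ℕ} {S : Finset (Fin n)} {u v : Fin n}

lemma Lp_card (hn : n = a + a) : (Lp n a).card = a := by
  rw [← Finset.card_image_of_injective (Lp n a) Fin.val_injective]
  have : (Lp n a).image Fin.val = Finset.range a := by
    ext m
    simp only [Finset.mem_image, Finset.mem_range, mem_Lp]
    constructor
    · rintro ⟨i, hi, rfl⟩; exact hi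
    · intro hm; exact ⟨⟨m, by omega⟩, hm, rfl⟩
  rw [this, Finset.card_range]

lemma Rp_card (hn : n = a + a) : (Rp n a).card = a := by
  have hsplit := Finset.card_filter_add_card_filter_not
    (s := (Finset.univ : Finset (Fin n))) (fun i => i.val < a)
  have hR : Rp n a = Finset.univ.filter (fun i => ¬ i.val < a) := by
    ext i; simp only [mem_Rp, Finset.mem_filter, Finset.mem_univ, true_and]; omega
  have hL : (Lp n a).card = a := Lp_card hn
  rw [hR]
  have hcardu : (Finset.univ : Finset (Fin n)).card = n := by simp
  rw [show Finset.filter (fun i => i.val < a) Finset.univ = Lp n a from rfl, hL, hcardu] at hsplit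
  omega

lemma E_union (ha : 2 ≤ a) (hu : u.val = 0) (hv : v.val = a) :
    E0 n a ∪ {(u, v)} = EF n a := by
  ext p
  obtain ⟨x, y⟩ := p
  simp only [Finset.mem_union, Finset.mem_singleton, mem_E0, mem_EF, Prod.mk.injEq]
  constructor
  · rintro (⟨h, _⟩ | ⟨rfl, rfl⟩)
    · exact h
    · omega
  · intro h
    by_cases hc : x.val = 0 ∧ y.val = a
    · exact Or.inr ⟨Fin.ext (hc.1.trans hu.symm), Fin.ext (hc.2.trans hv.symm)⟩
    · exact Or.inl ⟨h, hc⟩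

end Construction

namespace Construction

variable {n a : ℕ} {u v : Fin n}

set_option maxHeartbeats 1000000 in
lemma main_count (hn : n = a + a) (ha : 2 ≤ a) (hu : u.val = 0) (hv : v.val = a)
    (hd : Disjoint (Lp n a) (Rp n a)) (hE : E0 n a ⊆ Lp n a ×ˢ Rp n a)
    (hcards : (Lp n a).card + (Rp n a).card = n)
    (huL : u ∈ Lp n a) (hvR : v ∈ Rp n a) (huvE : (u, v) ∉ E0 n a) :
    ((BC (Lp n a) (Rp n a) (EF n a) \ BC (Lp n a) (Rp n a) (E0 n a)) ∪
      (BC (Lp n a) (Rp n a) (E0 n a) \ BC (Lp n a) (Rp n a) (EF n a))).ncard =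
      3 * 2 ^ ((n - 2) / 2) := by
  classical
  set P : Finset (Finset (Fin n)) := ((Lp n a).erase u).powerset with hPdef
  have hps : ∀ S ∈ P, S ⊆ (Lp n a).erase u := fun S hS => Finset.mem_powerset.1 hS
  have huS : ∀ S ∈ P, u ∉ S := fun S hS => u_not_mem (hps S hS)
  set g0 : Finset (Fin n) → Finset (Fin n) × Finset (Fin n) :=
    fun S => (insert u S, insert v (Yp n a S)) with hg0
  set g1 : Finset (Fin n) → Finset (Fin n) × Finset (Fin n) :=
    fun S => (insert u S, Yp n a S) with hg1
  set g2 : Finset (Fin n) → Finset (Fin n) × Finset (Fin n) :=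
    fun S => (S, insert v (Yp n a S)) with hg2
  set T : Finset (Finset (Fin n) × Finset (Fin n)) :=
    (P.image g0 ∪ P.image g1) ∪ P.image g2 with hT
  have hPcard : P.card = 2 ^ (a - 1) := by
    rw [hPdef, Finset.card_powerset, Finset.card_erase_of_mem huL, Lp_card hn]
  -- injectivity of the three maps on P
  have hinj0 : Set.InjOn g0 ↑P := by
    intro S₁ h₁ S₂ h₂ he
    have hfst : insert u S₁ = insert u S₂ := congrArg Prod.fst he
    rw [← Finset.erase_insert (huS S₁ (Finset.mem_coe.1 h₁)), hfst,
      Finset.erase_insert (huS S₂ (Finset.mem_coe.1 h₂))]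
  have hinj1 : Set.InjOn g1 ↑P := by
    intro S₁ h₁ S₂ h₂ he
    have hfst : insert u S₁ = insert u S₂ := congrArg Prod.fst he
    rw [← Finset.erase_insert (huS S₁ (Finset.mem_coe.1 h₁)), hfst,
      Finset.erase_insert (huS S₂ (Finset.mem_coe.1 h₂))]
  have hinj2 : Set.InjOn g2 ↑P := fun S₁ _ S₂ _ he => congrArg Prod.fst he
  -- disjointness of the images
  have hd01 : Disjoint (P.image g0) (P.image g1) := by
    rw [Finset.disjoint_left]
    rintro B hB0 hB1
    obtain ⟨S₁, h₁, e₁⟩ := Finset.mem_image.1 hB0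
    obtain ⟨S₂, h₂, e₂⟩ := Finset.mem_image.1 hB1
    have he := congrArg Prod.snd (e₁.trans e₂.symm)
    simp only [hg0, hg1] at he
    have hvmem : v ∈ Yp n a S₂ := by rw [← he]; exact Finset.mem_insert_self _ _
    have := (mem_Yp.1 hvmem).1
    omega
  have hd012 : Disjoint (P.image g0 ∪ P.image g1) (P.image g2) := by
    rw [Finset.disjoint_left]
    rintro B hB01 hB2
    obtain ⟨S₂, h₂, e₂⟩ := Finset.mem_image.1 hB2
    have huB : u ∈ B.1 := by
      rcases Finset.mem_union.1 hB01 with h | h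
      · obtain ⟨S₁, h₁, e₁⟩ := Finset.mem_image.1 h
        rw [← e₁]; exact Finset.mem_insert_self _ _
      · obtain ⟨S₁, h₁, e₁⟩ := Finset.mem_image.1 h
        rw [← e₁]; exact Finset.mem_insert_self _ _
    rw [← e₂] at huB
    exact huS S₂ h₂ huB
  have hTcard : T.card = 3 * 2 ^ (a - 1) := by
    rw [hT, Finset.card_union_of_disjoint hd012, Finset.card_union_of_disjoint hd01,
      Finset.card_image_of_injOn hinj0, Finset.card_image_of_injOn hinj1,
      Finset.card_image_of_injOn hinj2, hPcard]
    ring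
  -- T is contained in the symmetric difference
  set Υ := (BC (Lp n a) (Rp n a) (EF n a) \ BC (Lp n a) (Rp n a) (E0 n a)) ∪
      (BC (Lp n a) (Rp n a) (E0 n a) \ BC (Lp n a) (Rp n a) (EF n a)) with hU
  have hTsub : ↑T ⊆ Υ := by
    intro B hB
    rw [Finset.mem_coe, hT] at hB
    rcases Finset.mem_union.1 hB with h01 | h2
    · rcases Finset.mem_union.1 h01 with h0 | h1
      · obtain ⟨S, hS, rfl⟩ := Finset.mem_image.1 h0
        exact Or.inl ⟨f0_mem hn ha hu hv (hps S hS), f0_not_mem hn ha hu hv (hps S hS)⟩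
      · obtain ⟨S, hS, rfl⟩ := Finset.mem_image.1 h1
        exact Or.inr ⟨f1_mem hn ha hu hv (hps S hS), f1_not_mem hn ha hu hv (hps S hS)⟩
    · obtain ⟨S, hS, rfl⟩ := Finset.mem_image.1 h2
      exact Or.inr ⟨f2_mem hn ha hu hv (hps S hS), f2_not_mem hn ha hu hv (hps S hS)⟩
  have hfin : Υ.Finite :=
    ((bc_finite _ _ _).subset Set.diff_subset).union ((bc_finite _ _ _).subset Set.diff_subset)
  have hlow : 3 * 2 ^ ((n - 2) / 2) ≤ Υ.ncard := by
    have h1 : (↑T : Set (Finset (Fin n) × Finset (Fin n))).ncard = T.card :=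
      Set.ncard_coe_finset T
    have h2 := Set.ncard_le_ncard hTsub hfin
    have h3 : (n - 2) / 2 = a - 1 := by omega
    rw [h3]
    omega
  have hupp : Υ.ncard ≤ 3 * 2 ^ ((n - 2) / 2) := by
    have h := upper_bound n (by omega) ⟨a, hn⟩ hd hE hcards huL hvR huvE
    rwa [E_union ha hu hv] at h
  exact le_antisymm hupp hlow

end Construction

/-- For every even `n > 2`, the maximum of `|Υ(G, G+e)|` over all bipartite graphs `G` on
`n` vertices and non-edges `e` equals `3·2^((n-2)/2)`: every pair `(G, e)` satisfies the
upper bound, and some pair attains it. -/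
theorem stmt12 (n : ℕ) (hn : 2 < n) (heven : Even n) :
    (∀ (W : Type) [DecidableEq W] (L R : Finset W) (E : Finset (W × W)) (u v : W),
      Disjoint L R → E ⊆ L ×ˢ R → L.card + R.card = n →
      u ∈ L → v ∈ R → (u, v) ∉ E →
      ((BC L R (E ∪ {(u, v)}) \ BC L R E) ∪
        (BC L R E \ BC L R (E ∪ {(u, v)}))).ncard ≤ 3 * 2 ^ ((n - 2) / 2)) ∧
    (∃ (L R : Finset (Fin n)) (E : Finset (Fin n × Fin n)) (u v : Fin n),
      Disjoint L R ∧ E ⊆ L ×ˢ R ∧ L.card + R.card = n ∧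
      u ∈ L ∧ v ∈ R ∧ (u, v) ∉ E ∧
      ((BC L R (E ∪ {(u, v)}) \ BC L R E) ∪
        (BC L R E \ BC L R (E ∪ {(u, v)}))).ncard = 3 * 2 ^ ((n - 2) / 2)) := by

  constructor
  · intro W _ L R E u v hd hE hcard hu hv huv
    exact upper_bound n hn heven hd hE hcard hu hv huv
  · obtain ⟨a, hna⟩ := heven
    have ha : 2 ≤ a := by omega
    have h0 : (0 : ℕ) < n := by omega
    have hav : a < n := by omega
    set u : Fin n := ⟨0, h0⟩ with hudef
    set v : Fin n := ⟨a, hav⟩ with hvdef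
    have hu : u.val = 0 := rfl
    have hv : v.val = a := rfl
    have hd : Disjoint (Construction.Lp n a) (Construction.Rp n a) := by
      rw [Finset.disjoint_left]
      intro i h1 h2
      have := Construction.mem_Lp.1 h1
      have := Construction.mem_Rp.1 h2
      omega
    have hE : Construction.E0 n a ⊆ Construction.Lp n a ×ˢ Construction.Rp n a := by
      intro p hp
      obtain ⟨x, y⟩ := p
      have h := Construction.mem_E0.1 hp
      rw [Finset.mem_product]
      exact ⟨Construction.mem_Lp.2 h.1.1, Construction.mem_Rp.2 h.1.2.1⟩
    have hcards : (Construction.Lp n a).card + (Construction.Rp n a).card = n := by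
      rw [Construction.Lp_card hna, Construction.Rp_card hna]; omega
    have huL : u ∈ Construction.Lp n a := Construction.mem_Lp.2 (by rw [hu]; omega)
    have hvR : v ∈ Construction.Rp n a := Construction.mem_Rp.2 (by rw [hv])
    have huvE : (u, v) ∉ Construction.E0 n a := by
      intro hmem
      have := (Construction.mem_E0.1 hmem).2
      exact this ⟨hu, hv⟩
    refine ⟨Construction.Lp n a, Construction.Rp n a, Construction.E0 n a, u, v,
      hd, hE, hcards, huL, hvR, huvE, ?_⟩
    rw [Construction.E_union ha hu hv]
    exact Construction.main_count hna ha hu hv hd hE hcards huL hvR huvE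
end

section
/- For every even integer n > 2, the quantity λ(n), defined as the maximum of |Υ(G, G+H)| over all bipartite graphs G on n vertices and all sets H of new edges, satisfies (3/2)·2^{n/2} ≤ λ(n) ≤ 2·2^{n/2}; that is, some pair (G, H) achieves |Υ(G, G+H)| ≥ (3/2)·2^{n/2}, and every pair satisfies |Υ(G, G+H)| ≤ 2·2^{n/2}. -/
namespace Stmt14Aux


/-- Two maximal bicliques with the same left part coincide. -/
lemma bc_eq_of_fst_eq {V : Type*} [DecidableEq V] {L R : Finset V} {E : Finset (V × V)}
    {B B' : Finset V × Finset V} (hB : IsMaximalBiclique L R E B)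
    (hB' : IsMaximalBiclique L R E B') (h : B.1 = B'.1) : B = B' := by
  obtain ⟨X, Y⟩ := B; obtain ⟨X', Y'⟩ := B'
  simp only at h; subst h
  have hbi : IsBiclique L R E (X, Y ∪ Y') := by
    refine ⟨hB.1.1, Finset.union_subset hB.1.2.1 hB'.1.2.1, ?_⟩
    intro x hx y hy
    rcases Finset.mem_union.1 hy with hy | hy
    · exact hB.1.2.2 x hx y hy
    · exact hB'.1.2.2 x hx y hy
  have h1 := hB.2 _ hbi (Finset.Subset.refl X) Finset.subset_union_left
  have h2 := hB'.2 _ hbi (Finset.Subset.refl X) Finset.subset_union_right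
  exact h1.symm.trans h2

/-- Two maximal bicliques with the same right part coincide. -/
lemma bc_eq_of_snd_eq {V : Type*} [DecidableEq V] {L R : Finset V} {E : Finset (V × V)}
    {B B' : Finset V × Finset V} (hB : IsMaximalBiclique L R E B)
    (hB' : IsMaximalBiclique L R E B') (h : B.2 = B'.2) : B = B' := by
  obtain ⟨X, Y⟩ := B; obtain ⟨X', Y'⟩ := B'
  simp only at h; subst h
  have hbi : IsBiclique L R E (X ∪ X', Y) := by
    refine ⟨Finset.union_subset hB.1.1 hB'.1.1, hB.1.2.1, ?_⟩
    intro x hx y hy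
    rcases Finset.mem_union.1 hx with hx | hx
    · exact hB.1.2.2 x hx y hy
    · exact hB'.1.2.2 x hx y hy
  have h1 := hB.2 _ hbi Finset.subset_union_left (Finset.Subset.refl Y)
  have h2 := hB'.2 _ hbi Finset.subset_union_right (Finset.Subset.refl Y)
  exact h1.symm.trans h2

lemma bc_finite {V : Type*} [DecidableEq V] (L R : Finset V) (E : Finset (V × V)) :
    (BC L R E).Finite := by
  apply Set.Finite.subset (Finset.finite_toSet (L.powerset ×ˢ R.powerset))
  rintro ⟨X, Y⟩ hB
  simp only [Finset.coe_product, Set.mem_prod, Finset.mem_coe, Finset.mem_powerset]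
  exact ⟨hB.1.1, hB.1.2.1⟩

lemma bc_ncard_le_left {V : Type*} [DecidableEq V] (L R : Finset V) (E : Finset (V × V)) :
    (BC L R E).ncard ≤ 2 ^ L.card := by
  have hinj : Set.InjOn Prod.fst (BC L R E) := fun B hB B' hB' h =>
    bc_eq_of_fst_eq hB hB' h
  calc (BC L R E).ncard = (Prod.fst '' BC L R E).ncard :=
        (Set.ncard_image_of_injOn hinj).symm
    _ ≤ (↑L.powerset : Set (Finset V)).ncard := by
        apply Set.ncard_le_ncard _ (L.powerset.finite_toSet)
        rintro _ ⟨B, hB, rfl⟩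
        simpa [Finset.mem_powerset] using hB.1.1
    _ = 2 ^ L.card := by rw [Set.ncard_coe_finset, Finset.card_powerset]

lemma bc_ncard_le_right {V : Type*} [DecidableEq V] (L R : Finset V) (E : Finset (V × V)) :
    (BC L R E).ncard ≤ 2 ^ R.card := by
  have hinj : Set.InjOn Prod.snd (BC L R E) := fun B hB B' hB' h =>
    bc_eq_of_snd_eq hB hB' h
  calc (BC L R E).ncard = (Prod.snd '' BC L R E).ncard :=
        (Set.ncard_image_of_injOn hinj).symm
    _ ≤ (↑R.powerset : Set (Finset V)).ncard := by
        apply Set.ncard_le_ncard _ (R.powerset.finite_toSet)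
        rintro _ ⟨B, hB, rfl⟩
        simpa [Finset.mem_powerset] using hB.1.2.1
    _ = 2 ^ R.card := by rw [Set.ncard_coe_finset, Finset.card_powerset]

lemma upper (n : ℕ) (W : Type) [DecidableEq W] (L R : Finset W) (E H : Finset (W × W))
    (hcard : L.card + R.card = n) :
    ((BC L R (E ∪ H) \ BC L R E) ∪ (BC L R E \ BC L R (E ∪ H))).ncard
      ≤ 2 * 2 ^ (n / 2) := by
  have key : ∀ F : Finset (W × W), (BC L R F).ncard ≤ 2 ^ (n / 2) := by
    intro F
    rcases le_total L.card R.card with h | h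
    · exact le_trans (bc_ncard_le_left L R F)
        (Nat.pow_le_pow_right (by norm_num) (by omega))
    · exact le_trans (bc_ncard_le_right L R F)
        (Nat.pow_le_pow_right (by norm_num) (by omega))
  have h1 : (BC L R (E ∪ H) \ BC L R E).ncard ≤ 2 ^ (n / 2) :=
    le_trans (Set.ncard_le_ncard Set.diff_subset (bc_finite L R (E ∪ H))) (key _)
  have h2 : (BC L R E \ BC L R (E ∪ H)).ncard ≤ 2 ^ (n / 2) :=
    le_trans (Set.ncard_le_ncard Set.diff_subset (bc_finite L R E)) (key _)
  calc ((BC L R (E ∪ H) \ BC L R E) ∪ (BC L R E \ BC L R (E ∪ H))).ncard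
      ≤ (BC L R (E ∪ H) \ BC L R E).ncard + (BC L R E \ BC L R (E ∪ H)).ncard :=
        Set.ncard_union_le _ _
    _ ≤ 2 * 2 ^ (n / 2) := by omega


lemma lower (n k : ℕ) (hnk : n = k + k) (hk : 0 < k) :
    ∃ (L R : Finset (Fin n)) (E H : Finset (Fin n × Fin n)),
      Disjoint L R ∧ E ⊆ L ×ˢ R ∧ H ⊆ (L ×ˢ R) \ E ∧ L.card + R.card = n ∧
      3 * 2 ^ (k - 1) ≤
        ((BC L R (E ∪ H) \ BC L R E) ∪ (BC L R E \ BC L R (E ∪ H))).ncard := by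
  have h0n : 0 < n := by omega
  have hkn : k < n := by omega
  -- the "partner" involution x ↦ x ± k
  set τ : Fin n → Fin n := fun x => ⟨(x.val + k) % n, Nat.mod_lt _ h0n⟩ with hτdef
  have hτlt : ∀ x : Fin n, x.val < k → (τ x).val = x.val + k := by
    intro x hx
    show (x.val + k) % n = x.val + k
    exact Nat.mod_eq_of_lt (by omega)
  have hτge : ∀ x : Fin n, k ≤ x.val → (τ x).val = x.val - k := by
    intro x hx
    have hxn := x.isLt
    show (x.val + k) % n = x.val - k
    rw [Nat.mod_eq_sub_mod (by omega), Nat.mod_eq_of_lt (by omega)]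
    omega
  have hττ : ∀ x, τ (τ x) = x := by
    intro x
    have hxn := x.isLt
    rcases lt_or_ge x.val k with h | h
    · have h1 := hτlt x h
      have h2 := hτge (τ x) (by omega)
      exact Fin.ext (by omega)
    · have h1 := hτge x h
      have h2 := hτlt (τ x) (by omega)
      exact Fin.ext (by omega)
  have hτinj : Function.Injective τ := Function.LeftInverse.injective hττ
  -- vertices and edges
  set z0 : Fin n := ⟨0, h0n⟩ with hz0def
  set c : Fin n := ⟨k, hkn⟩ with hcdef
  have hτz0 : τ z0 = c := by
    apply Fin.ext
    rw [hτlt z0 (by simpa [hz0def] using hk)]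
    simp [hz0def, hcdef]
  set L : Finset (Fin n) := Finset.univ.filter (fun x => x.val < k) with hLdef
  set R : Finset (Fin n) := Finset.univ.filter (fun x => k ≤ x.val) with hRdef
  have hLmem : ∀ x : Fin n, x ∈ L ↔ x.val < k := by intro x; simp [hLdef]
  have hRmem : ∀ x : Fin n, x ∈ R ↔ k ≤ x.val := by intro x; simp [hRdef]
  have hτLR : ∀ x : Fin n, x ∈ L → τ x ∈ R := by
    intro x hx
    rw [hLmem] at hx
    rw [hRmem, hτlt x hx]; omega
  set E : Finset (Fin n × Fin n) := (L ×ˢ R).filter (fun p => p.2 ≠ τ p.1) with hEdef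
  set H : Finset (Fin n × Fin n) := {(z0, c)} with hHdef
  have hz0L : z0 ∈ L := (hLmem z0).2 hk
  have hcR : c ∈ R := by rw [hRmem]
  have hEmem : ∀ p : Fin n × Fin n, p ∈ E ↔ p.1 ∈ L ∧ p.2 ∈ R ∧ p.2 ≠ τ p.1 := by
    intro p
    simp [hEdef, Finset.mem_filter, Finset.mem_product, and_assoc]
  have hEHmem : ∀ p : Fin n × Fin n,
      p ∈ E ∪ H ↔ (p.1 ∈ L ∧ p.2 ∈ R ∧ p.2 ≠ τ p.1) ∨ p = (z0, c) := by
    intro p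
    rw [Finset.mem_union, hEmem, hHdef, Finset.mem_singleton]
  -- maximal bicliques of G
  have maxA : ∀ X : Finset (Fin n), X ⊆ L →
      IsMaximalBiclique L R E (X, R \ X.image τ) := by
    intro X hX
    constructor
    · refine ⟨hX, Finset.sdiff_subset, ?_⟩
      intro x hx y hy
      rw [Finset.mem_sdiff] at hy
      rw [hEmem]
      exact ⟨hX hx, hy.1, fun hEq => hy.2 (Finset.mem_image.2 ⟨x, hx, hEq.symm⟩)⟩
    · rintro ⟨X', Y'⟩ hB' hXX' hYY'
      obtain ⟨hX'L, hY'R, hadj⟩ := hB'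
      have hY' : Y' ⊆ R \ X.image τ := by
        intro y hy
        rw [Finset.mem_sdiff]
        refine ⟨hY'R hy, fun hmem => ?_⟩
        obtain ⟨x, hx, rfl⟩ := Finset.mem_image.1 hmem
        have := hadj x (hXX' hx) _ hy
        rw [hEmem] at this
        exact this.2.2 rfl
      have hX' : X' ⊆ X := by
        intro x hx
        by_contra hxX
        have htau : τ x ∈ R \ X.image τ := by
          rw [Finset.mem_sdiff]
          refine ⟨hτLR x (hX'L hx), fun hmem => ?_⟩
          obtain ⟨x', hx', hEq⟩ := Finset.mem_image.1 hmem
          exact hxX ((hτinj hEq) ▸ hx')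
        have := hadj x hx _ (hYY' htau)
        rw [hEmem] at this
        exact this.2.2 rfl
      exact Prod.ext (Finset.Subset.antisymm hX' hXX') (Finset.Subset.antisymm hY' hYY')
  -- maximal bicliques of G + H
  have maxB : ∀ X : Finset (Fin n), X ⊆ L → z0 ∈ X →
      IsMaximalBiclique L R (E ∪ H) (X, R \ (X.erase z0).image τ) := by
    intro X hX hz0X
    constructor
    · refine ⟨hX, Finset.sdiff_subset, ?_⟩
      intro x hx y hy
      rw [Finset.mem_sdiff] at hy
      rw [hEHmem]
      by_cases hxz : x = z0
      · subst hxz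
        by_cases hyc : y = c
        · exact Or.inr (by rw [hyc])
        · exact Or.inl ⟨hX hx, hy.1, fun hEq => hyc (hEq.trans hτz0)⟩
      · refine Or.inl ⟨hX hx, hy.1, fun hEq => hy.2 ?_⟩
        exact Finset.mem_image.2 ⟨x, Finset.mem_erase.2 ⟨hxz, hx⟩, hEq.symm⟩
    · rintro ⟨X', Y'⟩ hB' hXX' hYY'
      obtain ⟨hX'L, hY'R, hadj⟩ := hB'
      have hY' : Y' ⊆ R \ (X.erase z0).image τ := by
        intro y hy
        rw [Finset.mem_sdiff]
        refine ⟨hY'R hy, fun hmem => ?_⟩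
        obtain ⟨x, hx, rfl⟩ := Finset.mem_image.1 hmem
        have hxz : x ≠ z0 := (Finset.mem_erase.1 hx).1
        have := hadj x (hXX' (Finset.mem_of_mem_erase hx)) _ hy
        rw [hEHmem] at this
        rcases this with h | h
        · exact h.2.2 rfl
        · exact hxz (congrArg Prod.fst h)
      have hX' : X' ⊆ X := by
        intro x hx
        by_cases hxz : x = z0
        · rw [hxz]; exact hz0X
        · by_contra hxX
          have htau : τ x ∈ R \ (X.erase z0).image τ := by
            rw [Finset.mem_sdiff]
            refine ⟨hτLR x (hX'L hx), fun hmem => ?_⟩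
            obtain ⟨x', hx', hEq⟩ := Finset.mem_image.1 hmem
            exact hxX ((hτinj hEq) ▸ Finset.mem_of_mem_erase hx')
          have := hadj x hx _ (hYY' htau)
          rw [hEHmem] at this
          rcases this with h | h
          · exact h.2.2 rfl
          · exact hxz (congrArg Prod.fst h)
      exact Prod.ext (Finset.Subset.antisymm hX' hXX') (Finset.Subset.antisymm hY' hYY')
  -- z0 belongs to the left part of every maximal biclique of G + H
  have hz0mem : ∀ B : Finset (Fin n) × Finset (Fin n),
      IsMaximalBiclique L R (E ∪ H) B → z0 ∈ B.1 := by
    rintro ⟨X, Y⟩ hB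
    obtain ⟨⟨hXL, hYR, hadj⟩, hmax⟩ := hB
    have hbi : IsBiclique L R (E ∪ H) (insert z0 X, Y) := by
      refine ⟨Finset.insert_subset hz0L hXL, hYR, ?_⟩
      intro x hx y hy
      rcases Finset.mem_insert.1 hx with rfl | hx
      · rw [hEHmem]
        by_cases hyc : y = c
        · exact Or.inr (by rw [hyc])
        · exact Or.inl ⟨hz0L, hYR hy, fun hEq => hyc (hEq.trans hτz0)⟩
      · exact hadj x hx y hy
    have := hmax _ hbi (Finset.subset_insert _ _) (Finset.Subset.refl Y)
    have h1 : insert z0 X = X := congrArg Prod.fst this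
    exact Finset.insert_eq_self.1 h1
  -- identify the two families explicitly
  set f : Finset (Fin n) → Finset (Fin n) × Finset (Fin n) :=
    fun X => (X, R \ X.image τ) with hfdef
  set g : Finset (Fin n) → Finset (Fin n) × Finset (Fin n) :=
    fun X => (X, R \ (X.erase z0).image τ) with hgdef
  have hBCE : BC L R E = ↑(L.powerset.image f) := by
    ext B
    simp only [Finset.coe_image, Set.mem_image, Finset.mem_coe, Finset.mem_powerset]
    constructor
    · intro hB
      refine ⟨B.1, hB.1.1, ?_⟩
      exact (bc_eq_of_fst_eq (maxA B.1 hB.1.1) hB rfl)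
    · rintro ⟨X, hX, rfl⟩
      exact maxA X hX
  have hBCEH : BC L R (E ∪ H) = ↑((L.powerset.filter (fun X => z0 ∈ X)).image g) := by
    ext B
    simp only [Finset.coe_image, Set.mem_image, Finset.mem_coe, Finset.mem_filter,
      Finset.mem_powerset]
    constructor
    · intro hB
      have hz := hz0mem B hB
      refine ⟨B.1, ⟨hB.1.1, hz⟩, ?_⟩
      exact (bc_eq_of_fst_eq (maxB B.1 hB.1.1 hz) hB rfl)
    · rintro ⟨X, ⟨hX, hz⟩, rfl⟩
      exact maxB X hX hz
  -- cardinalities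
  have hLcard : L.card = k := by
    rw [← Finset.card_range k]
    apply Finset.card_bij (fun (x : Fin n) _ => x.val)
    · intro a ha
      rw [Finset.mem_range]
      exact (hLmem a).1 ha
    · intro a _ b _ hab
      exact Fin.ext hab
    · intro b hb
      rw [Finset.mem_range] at hb
      exact ⟨⟨b, by omega⟩, (hLmem _).2 hb, rfl⟩
  have hRcard : R.card = k := by
    rw [← Finset.card_range k]
    apply Finset.card_bij (fun (x : Fin n) _ => x.val - k)
    · intro a ha
      have := a.isLt
      rw [Finset.mem_range]
      have := (hRmem a).1 ha
      omega
    · intro a ha b hb hab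
      have ha' := (hRmem a).1 ha
      have hb' := (hRmem b).1 hb
      exact Fin.ext (by omega)
    · intro b hb
      rw [Finset.mem_range] at hb
      refine ⟨⟨b + k, by omega⟩, (hRmem _).2 (by simp), by simp⟩
  have hfinj : ∀ X ∈ L.powerset, ∀ Y ∈ L.powerset, f X = f Y → X = Y := by
    intro X _ Y _ h
    exact congrArg Prod.fst h
  have hcard1 : (L.powerset.image f).card = 2 ^ k := by
    rw [Finset.card_image_of_injOn hfinj, Finset.card_powerset, hLcard]
  have hcard2 : ((L.powerset.filter (fun X => z0 ∈ X)).image g).card = 2 ^ (k - 1) := by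
    have hginj : ∀ X ∈ L.powerset.filter (fun X => z0 ∈ X),
        ∀ Y ∈ L.powerset.filter (fun X => z0 ∈ X), g X = g Y → X = Y := by
      intro X _ Y _ h
      exact congrArg Prod.fst h
    rw [Finset.card_image_of_injOn hginj]
    have : (L.powerset.filter (fun X => z0 ∈ X)).card = (L.erase z0).powerset.card := by
      apply Finset.card_bij (fun (X : Finset (Fin n)) _ => X.erase z0)
      · intro X hX
        rw [Finset.mem_filter, Finset.mem_powerset] at hX
        rw [Finset.mem_powerset]
        exact Finset.erase_subset_erase _ hX.1
      · intro X hX Y hY h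
        rw [Finset.mem_filter] at hX hY
        rw [← Finset.insert_erase hX.2, h, Finset.insert_erase hY.2]
      · intro S hS
        rw [Finset.mem_powerset] at hS
        have hz0S : z0 ∉ S := fun h => (Finset.mem_erase.1 (hS h)).1 rfl
        refine ⟨insert z0 S, ?_, ?_⟩
        · rw [Finset.mem_filter, Finset.mem_powerset]
          exact ⟨Finset.insert_subset hz0L (hS.trans (Finset.erase_subset _ _)),
            Finset.mem_insert_self _ _⟩
        · rw [Finset.erase_insert hz0S]
    rw [this, Finset.card_powerset, Finset.card_erase_of_mem hz0L, hLcard]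
  -- the two families are disjoint
  have hdisjBC : Disjoint (BC L R (E ∪ H)) (BC L R E) := by
    rw [Set.disjoint_left]
    intro B hBA hBB
    rw [hBCEH] at hBA
    rw [hBCE] at hBB
    simp only [Finset.coe_image, Set.mem_image, Finset.mem_coe, Finset.mem_filter,
      Finset.mem_powerset] at hBA hBB
    obtain ⟨X, ⟨hXL, hz0X⟩, rfl⟩ := hBA
    obtain ⟨X', hX'L, hEq⟩ := hBB
    have hX : X' = X := congrArg Prod.fst hEq
    subst hX
    have h2 : R \ X'.image τ = R \ (X'.erase z0).image τ := congrArg Prod.snd hEq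
    have hc1 : c ∈ R \ (X'.erase z0).image τ := by
      rw [Finset.mem_sdiff]
      refine ⟨hcR, fun hmem => ?_⟩
      obtain ⟨x, hx, hEq'⟩ := Finset.mem_image.1 hmem
      have : x = z0 := hτinj (hEq'.trans hτz0.symm)
      exact (Finset.mem_erase.1 hx).1 this
    rw [← h2, Finset.mem_sdiff] at hc1
    exact hc1.2 (Finset.mem_image.2 ⟨z0, hz0X, hτz0⟩)
  -- assemble
  refine ⟨L, R, E, H, ?_, ?_, ?_, ?_, ?_⟩
  · rw [Finset.disjoint_left]
    intro a haL haR
    rw [hLmem] at haL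
    rw [hRmem] at haR
    omega
  · rw [hEdef]; exact Finset.filter_subset _ _
  · rw [hHdef]
    intro p hp
    rw [Finset.mem_singleton] at hp
    subst hp
    rw [Finset.mem_sdiff, Finset.mem_product]
    refine ⟨⟨hz0L, hcR⟩, fun h => ?_⟩
    rw [hEmem] at h
    exact h.2.2 hτz0.symm
  · omega
  · have hA : (BC L R (E ∪ H)).ncard = 2 ^ (k - 1) := by
      rw [hBCEH, Set.ncard_coe_finset, hcard2]
    have hB : (BC L R E).ncard = 2 ^ k := by
      rw [hBCE, Set.ncard_coe_finset, hcard1]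
    have hd1 : BC L R (E ∪ H) \ BC L R E = BC L R (E ∪ H) := hdisjBC.sdiff_eq_left
    have hd2 : BC L R E \ BC L R (E ∪ H) = BC L R E := hdisjBC.symm.sdiff_eq_left
    rw [hd1, hd2, Set.ncard_union_eq hdisjBC
      (by rw [hBCEH]; exact Finset.finite_toSet _)
      (by rw [hBCE]; exact Finset.finite_toSet _), hA, hB]
    have hpow : 2 ^ k = 2 * 2 ^ (k - 1) := by
      conv_lhs => rw [show k = (k - 1) + 1 by omega]
      rw [pow_succ]
      ring
    omega

end Stmt14Aux

/-- For every even `n > 2`: some bipartite graph `G` on `n` vertices and edge set `H`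
achieve `|Υ(G, G+H)| ≥ (3/2)·2^(n/2) = 3·2^(n/2 - 1)`, and every such pair satisfies
`|Υ(G, G+H)| ≤ 2·2^(n/2)`; i.e. `(3/2)·2^(n/2) ≤ λ(n) ≤ 2·2^(n/2)`. -/
theorem stmt14 (n : ℕ) (hn : 2 < n) (heven : Even n) :
    (∃ (L R : Finset (Fin n)) (E H : Finset (Fin n × Fin n)),
      Disjoint L R ∧ E ⊆ L ×ˢ R ∧ H ⊆ (L ×ˢ R) \ E ∧ L.card + R.card = n ∧
      3 * 2 ^ (n / 2 - 1) ≤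
        ((BC L R (E ∪ H) \ BC L R E) ∪ (BC L R E \ BC L R (E ∪ H))).ncard) ∧
    (∀ (W : Type) [DecidableEq W] (L R : Finset W) (E H : Finset (W × W)),
      Disjoint L R → E ⊆ L ×ˢ R → H ⊆ (L ×ˢ R) \ E → L.card + R.card = n →
      ((BC L R (E ∪ H) \ BC L R E) ∪ (BC L R E \ BC L R (E ∪ H))).ncard
        ≤ 2 * 2 ^ (n / 2)) := by
  obtain ⟨k, hkn⟩ := heven
  have hk0 : 0 < k := by omega
  have hdiv : n / 2 = k := by omega
  constructor
  · rw [hdiv]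
    exact Stmt14Aux.lower n k hkn hk0
  · intro W _ L R E H _ _ _ hcard
    exact Stmt14Aux.upper n W L R E H hcard
end

section
/- Let X and Y be finite sets and H a set of ρ pairs from X × Y. Then the bipartite graph with vertex sets X and Y and edge set (X × Y) \ H (a complete bipartite graph with ρ edges removed) has at most 2^ρ maximal bicliques. -/
lemma snd_eq_of_max {V : Type*} [DecidableEq V] (X Y : Finset V)
    (H : Finset (V × V)) (B : Finset V × Finset V)
    (hB : IsMaximalBiclique X Y ((X ×ˢ Y) \ H) B) :
    B.2 = Y.filter (fun y => ∀ x ∈ B.1, (x, y) ∉ H) := by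
  obtain ⟨⟨h1, h2, h3⟩, hmax⟩ := hB
  have hbic : IsBiclique X Y ((X ×ˢ Y) \ H)
      (B.1, Y.filter (fun y => ∀ x ∈ B.1, (x, y) ∉ H)) := by
    refine ⟨h1, Finset.filter_subset _ _, fun x hx y hy => ?_⟩
    simp only [Finset.mem_filter] at hy
    simp only [Finset.mem_sdiff, Finset.mem_product]
    exact ⟨⟨h1 hx, hy.1⟩, hy.2 x hx⟩
  have hsub : B.2 ⊆ Y.filter (fun y => ∀ x ∈ B.1, (x, y) ∉ H) := by
    intro y hy
    simp only [Finset.mem_filter]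
    refine ⟨h2 hy, fun x hx => ?_⟩
    have := h3 x hx y hy
    simp only [Finset.mem_sdiff] at this
    exact this.2
  have := hmax _ hbic (le_refl _) hsub
  exact (congrArg Prod.snd this).symm

lemma fst_eq_of_max {V : Type*} [DecidableEq V] (X Y : Finset V)
    (H : Finset (V × V)) (B : Finset V × Finset V)
    (hB : IsMaximalBiclique X Y ((X ×ˢ Y) \ H) B) :
    B.1 = X.filter (fun x => ∀ y ∈ B.2, (x, y) ∉ H) := by
  obtain ⟨⟨h1, h2, h3⟩, hmax⟩ := hB
  have hbic : IsBiclique X Y ((X ×ˢ Y) \ H)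
      (X.filter (fun x => ∀ y ∈ B.2, (x, y) ∉ H), B.2) := by
    refine ⟨Finset.filter_subset _ _, h2, fun x hx y hy => ?_⟩
    simp only [Finset.mem_filter] at hx
    simp only [Finset.mem_sdiff, Finset.mem_product]
    exact ⟨⟨hx.1, h2 hy⟩, hx.2 y hy⟩
  have hsub : B.1 ⊆ X.filter (fun x => ∀ y ∈ B.2, (x, y) ∉ H) := by
    intro x hx
    simp only [Finset.mem_filter]
    refine ⟨h1 hx, fun y hy => ?_⟩
    have := h3 x hx y hy
    simp only [Finset.mem_sdiff] at this
    exact this.2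
  have := hmax _ hbic hsub (le_refl _)
  exact (congrArg Prod.fst this).symm

/-- A complete bipartite graph on parts `X`, `Y` with a set `H` of `ρ` edges removed has at
most `2^ρ` maximal bicliques. -/
theorem stmt15 {V : Type*} [DecidableEq V] (X Y : Finset V) (hdisj : Disjoint X Y)
    (H : Finset (V × V)) (hH : H ⊆ X ×ˢ Y) :
    (BC X Y ((X ×ˢ Y) \ H)).ncard ≤ 2 ^ H.card := by
  classical
  have key : (BC X Y ((X ×ˢ Y) \ H)).ncard ≤ (↑H.powerset : Set (Finset (V × V))).ncard := by
    apply Set.ncard_le_ncard_of_injOn (fun B => H.filter (fun p => p.1 ∈ B.1))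
    · intro B _
      simp only [Finset.coe_powerset, Set.mem_preimage, Set.mem_powerset_iff,
        Finset.coe_subset]
      exact Finset.filter_subset _ _
    · intro B hB B' hB' heq
      dsimp only at heq
      have h2 : B.2 = B'.2 := by
        rw [snd_eq_of_max X Y H B hB, snd_eq_of_max X Y H B' hB']
        apply Finset.filter_congr
        intro y hy
        constructor
        · intro h x hx hmem
          have : (x, y) ∈ H.filter (fun p => p.1 ∈ B'.1) := by
            simp only [Finset.mem_filter]; exact ⟨hmem, hx⟩
          rw [← heq] at this
          simp only [Finset.mem_filter] at this
          exact h x this.2 this.1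
        · intro h x hx hmem
          have : (x, y) ∈ H.filter (fun p => p.1 ∈ B.1) := by
            simp only [Finset.mem_filter]; exact ⟨hmem, hx⟩
          rw [heq] at this
          simp only [Finset.mem_filter] at this
          exact h x this.2 this.1
      have h1 : B.1 = B'.1 := by
        rw [fst_eq_of_max X Y H B hB, fst_eq_of_max X Y H B' hB', h2]
      exact Prod.ext h1 h2
  rwa [Set.ncard_coe_finset, Finset.card_powerset] at key
end

section
/- Let X and Y be finite sets, H a set of pairs from X × Y, and e = (u, v) ∈ (X × Y) \ H. Let B − H denote the bipartite graph with vertex sets X, Y and edge set (X × Y) \ H, and B − (H ∪ {e}) the graph with edge set (X × Y) \ (H ∪ {e}). Then every maximal biclique of B − (H ∪ {e}) is either (i) a maximal biclique (X', Y') of B − H with u ∉ X' or v ∉ Y', or (ii) of the form (X' \ {u}, Y') or (X', Y' \ {v}) for some maximal biclique (X', Y') of B − H with u ∈ X' and v ∈ Y'. -/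
open Classical in
/-- Every biclique extends to a maximal biclique. -/
lemma exists_maximal_extension {V : Type*} (L R : Finset V) (E : Finset (V × V))
    (B : Finset V × Finset V) (hB : IsBiclique L R E B) :
    ∃ B', IsMaximalBiclique L R E B' ∧ B.1 ⊆ B'.1 ∧ B.2 ⊆ B'.2 := by
  classical
  set S : Finset (Finset V × Finset V) :=
    (L.powerset ×ˢ R.powerset).filter
      (fun B' => IsBiclique L R E B' ∧ B.1 ⊆ B'.1 ∧ B.2 ⊆ B'.2) with hS
  have hBS : B ∈ S := by
    simp only [hS, Finset.mem_filter, Finset.mem_product, Finset.mem_powerset]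
    exact ⟨⟨hB.1, hB.2.1⟩, hB, subset_rfl, subset_rfl⟩
  obtain ⟨B', hB'S, hmax⟩ := S.exists_max_image (fun B' => B'.1.card + B'.2.card) ⟨B, hBS⟩
  simp only [hS, Finset.mem_filter, Finset.mem_product, Finset.mem_powerset] at hB'S
  obtain ⟨-, hB'bc, h1, h2⟩ := hB'S
  refine ⟨B', ⟨hB'bc, ?_⟩, h1, h2⟩
  intro B'' hB''bc hs1 hs2
  have hB''S : B'' ∈ S := by
    simp only [hS, Finset.mem_filter, Finset.mem_product, Finset.mem_powerset]
    exact ⟨⟨hB''bc.1, hB''bc.2.1⟩, hB''bc, h1.trans hs1, h2.trans hs2⟩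
  have hc := hmax B'' hB''S
  have hc1 : B'.1.card ≤ B''.1.card := Finset.card_le_card hs1
  have hc2 : B'.2.card ≤ B''.2.card := Finset.card_le_card hs2
  have e1 : B''.1 = B'.1 := (Finset.eq_of_subset_of_card_le hs1 (by omega)).symm
  have e2 : B''.2 = B'.2 := (Finset.eq_of_subset_of_card_le hs2 (by omega)).symm
  exact Prod.ext e1 e2

/-- Removing one more edge `e = (u, v)` from the complete bipartite graph on `X`, `Y` minus
`H`: every maximal biclique of `B − (H ∪ {e})` is either (i) a maximal biclique `(X', Y')`
of `B − H` with `u ∉ X'` or `v ∉ Y'`, or (ii) of the form `(X' \ {u}, Y')` or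
`(X', Y' \ {v})` for some maximal biclique `(X', Y')` of `B − H` with `u ∈ X'`, `v ∈ Y'`. -/
theorem stmt17 {V : Type*} [DecidableEq V] (X Y : Finset V) (hdisj : Disjoint X Y)
    (H : Finset (V × V)) (hH : H ⊆ X ×ˢ Y)
    (u v : V) (he : (u, v) ∈ (X ×ˢ Y) \ H) :
    ∀ B ∈ BC X Y ((X ×ˢ Y) \ (H ∪ {(u, v)})),
      (B ∈ BC X Y ((X ×ˢ Y) \ H) ∧ (u ∉ B.1 ∨ v ∉ B.2)) ∨
      (∃ B' ∈ BC X Y ((X ×ˢ Y) \ H), u ∈ B'.1 ∧ v ∈ B'.2 ∧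
        (B = (B'.1.erase u, B'.2) ∨ B = (B'.1, B'.2.erase v))) := by
  intro B hB
  obtain ⟨⟨hBL, hBR, hBE⟩, hBmax⟩ := hB
  set E : Finset (V × V) := (X ×ˢ Y) \ H with hE
  set E' : Finset (V × V) := (X ×ˢ Y) \ (H ∪ {(u, v)}) with hE'
  have hE'E : E' ⊆ E := by
    intro p hp
    simp only [hE', Finset.mem_sdiff, Finset.mem_union] at hp
    exact Finset.mem_sdiff.mpr ⟨hp.1, fun h => hp.2 (Or.inl h)⟩
  -- B is a biclique of E
  have hBbcE : IsBiclique X Y E B := ⟨hBL, hBR, fun x hx y hy => hE'E (hBE x hx y hy)⟩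
  obtain ⟨B', ⟨hB'bc, hB'max⟩, hs1, hs2⟩ := exists_maximal_extension X Y E B hBbcE
  -- key: a biclique of E avoiding the pair (u,v) is a biclique of E'
  have toE' : ∀ C : Finset V × Finset V, IsBiclique X Y E C → (u ∉ C.1 ∨ v ∉ C.2) →
      IsBiclique X Y E' C := by
    rintro C ⟨hC1, hC2, hCE⟩ havoid
    refine ⟨hC1, hC2, fun x hx y hy => ?_⟩
    have := hCE x hx y hy
    simp only [hE, Finset.mem_sdiff] at this
    simp only [hE', Finset.mem_sdiff, Finset.mem_union, Finset.mem_singleton]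
    refine ⟨this.1, ?_⟩
    rintro (h | h)
    · exact this.2 h
    · obtain ⟨h1, h2⟩ := Prod.mk.inj h
      subst h1; subst h2
      rcases havoid with h' | h'
      · exact h' hx
      · exact h' hy
  by_cases hu : u ∈ B'.1 ∧ v ∈ B'.2
  · -- case (ii)
    refine Or.inr ⟨B', ⟨hB'bc, hB'max⟩, hu.1, hu.2, ?_⟩
    -- (u,v) ∉ E', so not both u ∈ B.1, v ∈ B.2
    have hnot : ¬(u ∈ B.1 ∧ v ∈ B.2) := by
      rintro ⟨h1, h2⟩
      have := hBE u h1 v h2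
      simp [hE'] at this
    by_cases huB : u ∈ B.1
    · -- then v ∉ B.2, B = (B'.1, B'.2.erase v)
      have hvB : v ∉ B.2 := fun h => hnot ⟨huB, h⟩
      refine Or.inr ?_
      have hbc : IsBiclique X Y E' (B'.1, B'.2.erase v) := by
        refine toE' _ ⟨hB'bc.1, (Finset.erase_subset _ _).trans hB'bc.2.1,
          fun x hx y hy => hB'bc.2.2 x hx y (Finset.mem_of_mem_erase hy)⟩ ?_
        exact Or.inr (Finset.notMem_erase _ _)
      exact (hBmax _ hbc hs1 (fun y hy => Finset.mem_erase.mpr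
        ⟨fun h => hvB (h ▸ hy), hs2 hy⟩)).symm
    · -- B = (B'.1.erase u, B'.2)
      refine Or.inl ?_
      have hbc : IsBiclique X Y E' (B'.1.erase u, B'.2) := by
        refine toE' _ ⟨(Finset.erase_subset _ _).trans hB'bc.1, hB'bc.2.1,
          fun x hx y hy => hB'bc.2.2 x (Finset.mem_of_mem_erase hx) y hy⟩ ?_
        exact Or.inl (Finset.notMem_erase _ _)
      exact (hBmax _ hbc (fun x hx => Finset.mem_erase.mpr
        ⟨fun h => huB (h ▸ hx), hs1 hx⟩) hs2).symm
  · -- case (i): u ∉ B'.1 or v ∉ B'.2, so B' is a biclique of E', hence B' = B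
    have havoid : u ∉ B'.1 ∨ v ∉ B'.2 := by tauto
    have hB'E' : IsBiclique X Y E' B' := toE' B' hB'bc havoid
    have hBB' : B' = B := hBmax B' hB'E' hs1 hs2
    refine Or.inl ⟨⟨hBB' ▸ hB'bc, fun C hC h1 h2 => hBB' ▸ hB'max C hC (hBB' ▸ h1) (hBB' ▸ h2)⟩,
      hBB' ▸ havoid⟩
end

section
/- Let G = (L, R, E) be a bipartite graph and H ⊆ (L × R) \ E a set of new edges. For every subsumed biclique b' ∈ Υ^del(G, G+H) there exists a new maximal biclique b = (X₂, Y₂) ∈ Υ^new(G, G+H) such that b' is a maximal biclique of the bipartite graph b − H, defined as the graph with vertex sets X₂ and Y₂ and edge set (X₂ × Y₂) \ H. -/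
/-- Every biclique is contained in a maximal biclique. -/
lemma exists_maximal_biclique_ext {V : Type*} [DecidableEq V] (L R : Finset V)
    (E : Finset (V × V)) (B : Finset V × Finset V) (hB : IsBiclique L R E B) :
    ∃ M, IsMaximalBiclique L R E M ∧ B.1 ⊆ M.1 ∧ B.2 ⊆ M.2 := by
  classical
  set S : Finset (Finset V × Finset V) :=
    (L.powerset ×ˢ R.powerset).filter
      (fun P => IsBiclique L R E P ∧ B.1 ⊆ P.1 ∧ B.2 ⊆ P.2) with hS
  have hBS : B ∈ S := by
    simp only [hS, Finset.mem_filter, Finset.mem_product, Finset.mem_powerset]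
    exact ⟨⟨hB.1, hB.2.1⟩, hB, subset_rfl, subset_rfl⟩
  obtain ⟨M, hMS, hmax⟩ := S.exists_max_image (fun P => P.1.card + P.2.card) ⟨B, hBS⟩
  simp only [hS, Finset.mem_filter, Finset.mem_product, Finset.mem_powerset] at hMS
  obtain ⟨-, hMb, hM1, hM2⟩ := hMS
  refine ⟨M, ⟨hMb, ?_⟩, hM1, hM2⟩
  intro B' hB' h1 h2
  have hB'S : B' ∈ S := by
    simp only [hS, Finset.mem_filter, Finset.mem_product, Finset.mem_powerset]
    exact ⟨⟨hB'.1, hB'.2.1⟩, hB', hM1.trans h1, hM2.trans h2⟩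
  have hle := hmax B' hB'S
  have hc1 : M.1.card ≤ B'.1.card := Finset.card_le_card h1
  have hc2 : M.2.card ≤ B'.2.card := Finset.card_le_card h2
  have e1 : B'.1 = M.1 := (Finset.eq_of_subset_of_card_le h1 (by omega)).symm
  have e2 : B'.2 = M.2 := (Finset.eq_of_subset_of_card_le h2 (by omega)).symm
  exact Prod.ext e1 e2

/-- Every subsumed biclique `b' ∈ Υ^del(G, G+H)` is a maximal biclique of `b − H` for some
new maximal biclique `b = (X₂, Y₂) ∈ Υ^new(G, G+H)`, where `b − H` is the bipartite graph
with parts `X₂`, `Y₂` and edge set `(X₂ × Y₂) \ H`. -/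
theorem stmt18 {V : Type*} [DecidableEq V] (L R : Finset V) (E H : Finset (V × V))
    (hdisj : Disjoint L R) (hE : E ⊆ L ×ˢ R) (hH : H ⊆ (L ×ˢ R) \ E) :
    ∀ b' ∈ BC L R E \ BC L R (E ∪ H),
      ∃ b ∈ BC L R (E ∪ H) \ BC L R E,
        b' ∈ BC b.1 b.2 ((b.1 ×ˢ b.2) \ H) := by
  rintro b' ⟨hb'E, hb'not⟩
  obtain ⟨hb'bic, hb'max⟩ := hb'E
  -- b' is a biclique of E ∪ H
  have hb'bicH : IsBiclique L R (E ∪ H) b' :=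
    ⟨hb'bic.1, hb'bic.2.1, fun x hx y hy => Finset.mem_union_left _ (hb'bic.2.2 x hx y hy)⟩
  obtain ⟨M, hMmax, h1, h2⟩ := exists_maximal_biclique_ext L R (E ∪ H) b' hb'bicH
  have hMnotE : M ∉ BC L R E := by
    intro hME
    have := hb'max M hME.1 h1 h2
    subst this
    exact hb'not hMmax
  refine ⟨M, ⟨hMmax, hMnotE⟩, ?_⟩
  have hHE : ∀ p ∈ H, p ∉ E := by
    intro p hp
    exact (Finset.mem_sdiff.mp (hH hp)).2
  constructor
  · -- b' is a biclique of (M.1, M.2, M.1 ×ˢ M.2 \ H)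
    refine ⟨h1, h2, fun x hx y hy => ?_⟩
    rw [Finset.mem_sdiff, Finset.mem_product]
    have hxy := hb'bic.2.2 x hx y hy
    exact ⟨⟨h1 hx, h2 hy⟩, fun hmem => hHE _ hmem hxy⟩
  · intro B' hB' hx hy
    -- B' is a biclique of E
    have : IsBiclique L R E B' := by
      refine ⟨hB'.1.trans hMmax.1.1, hB'.2.1.trans hMmax.1.2.1, fun x hxm y hym => ?_⟩
      have := hB'.2.2 x hxm y hym
      rw [Finset.mem_sdiff] at this
      have hEH := hMmax.1.2.2 x (hB'.1 hxm) y (hB'.2.1 hym)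
      rcases Finset.mem_union.mp hEH with h | h
      · exact h
      · exact absurd h this.2
    exact hb'max B' this hx hy
end
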